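/- arXiv:1602.06969 — 9 statements merged into one kernel-verified Lean document; each statement's English description precedes it below -/
import Mathlib

section
/- Let d ≥ 1 and let U be a d×d complex unitary matrix. Then U Δ(ρ) U† = Δ(U ρ U†) for every d×d complex matrix ρ if and only if U is an incoherent unitary, i.e., there exist a permutation π of Fin d and real phases θ_x such that U_{y x} = e^{iθ_x} when y = π(x) and U_{y x} = 0 otherwise. -/
open Matrix

/-- The dephasing map: zeroes out all off-diagonal entries. -/
def deph {d : ℕ} (ρ : Matrix (Fin d) (Fin d) ℂ) : Matrix (Fin d) (Fin d) ℂ :=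
  Matrix.diagonal fun x => ρ x x

/-!
Conjugating the matrix unit `|x⟩⟨x|` by `U` gives the rank-one matrix `U y x * conj (U z x)`.
Since `Δ` fixes `|x⟩⟨x|`, commuting with `Δ` forces this matrix to be diagonal, so every column
of `U` has at most one nonzero entry. Unitarity makes that entry unimodular and its row `π x`
injective in `x`, hence a permutation. Conversely, conjugation by a monomial matrix only relabels
and rescales entries, so it commutes with taking the diagonal part.
-/

namespace Matrix

variable {n R 𝕜 : Type*} [Fintype n] [DecidableEq n]

theorem mul_mul_conjTranspose_apply_of_monomial [Semiring R] [StarRing R]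
    {U : Matrix n n R} {π : Equiv.Perm n} {c : n → R}
    (hU : ∀ y x, U y x = if y = π x then c x else 0) (A : Matrix n n R) (y z : n) :
    (U * A * Uᴴ) y z = c (π.symm y) * A (π.symm y) (π.symm z) * star (c (π.symm z)) := by
  have hU' : ∀ y x, U y x = if π.symm y = x then c x else 0 := by
    simp only [hU, ← Equiv.symm_apply_eq, implies_true]
  simp only [mul_apply, conjTranspose_apply, hU', ite_mul, zero_mul, Finset.sum_ite_eq,
    Finset.mem_univ, if_true, apply_ite star, star_zero, mul_ite, mul_zero]

theorem mul_single_mul_conjTranspose_apply [Semiring R] [StarRing R]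
    (U : Matrix n n R) (x y z : n) :
    (U * single x x (1 : R) * Uᴴ) y z = U y x * star (U z x) := by
  simp [mul_apply, single_apply, ite_and]

theorem exists_ne_zero_of_mem_unitaryGroup [RCLike 𝕜] {U : Matrix n n 𝕜}
    (hU : U ∈ unitaryGroup n 𝕜) (x : n) : ∃ y, U y x ≠ 0 := by
  by_contra! h
  have := congr_fun₂ (mem_unitaryGroup_iff'.mp hU) x x
  simp [mul_apply, h] at this

theorem exists_monomial_of_mem_unitaryGroup [RCLike 𝕜] {U : Matrix n n 𝕜}
    (hU : U ∈ unitaryGroup n 𝕜) (hcol : ∀ x y z, U y x ≠ 0 → U z x ≠ 0 → y = z) :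
    ∃ (π : Equiv.Perm n) (c : n → 𝕜), (∀ x, ‖c x‖ = 1) ∧
      ∀ y x, U y x = if y = π x then c x else 0 := by
  have hUU := mem_unitaryGroup_iff'.mp hU
  choose f hf using exists_ne_zero_of_mem_unitaryGroup hU
  have hzero : ∀ x y, y ≠ f x → U y x = 0 := fun x y hy =>
    by_contra fun h => hy (hcol x y (f x) h (hf x))
  have hinner : ∀ x x', (star U * U) x x' = star (U (f x) x) * U (f x) x' := by
    intro x x'
    rw [mul_apply, Finset.sum_eq_single (f x)]
    · rfl
    · intro y _ hy
      simp [hzero x y hy]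
    · simp
  have hf_inj : f.Injective := by
    intro x x' hxx'
    by_contra hne
    have hU_ne : U (f x) x' ≠ 0 := by rw [hxx']; exact hf x'
    have := hinner x x'
    rw [hUU, one_apply_ne hne] at this
    exact mul_ne_zero (star_ne_zero.mpr (hf x)) hU_ne this.symm
  have hnorm : ∀ x, ‖U (f x) x‖ = 1 := by
    intro x
    have := hinner x x
    rw [hUU, one_apply_eq, RCLike.star_def, RCLike.conj_mul] at this
    exact (pow_eq_one_iff_of_nonneg (norm_nonneg _) two_ne_zero).mp (mod_cast this.symm)
  refine ⟨Equiv.ofBijective f (Finite.injective_iff_bijective.mp hf_inj), fun x => U (f x) x,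
    hnorm, fun y x => ?_⟩
  split_ifs with h
  · rw [h]; rfl
  · exact hzero x y h

end Matrix

theorem mul_deph_mul_conjTranspose_of_monomial {d : ℕ} {U : Matrix (Fin d) (Fin d) ℂ}
    {π : Equiv.Perm (Fin d)} {c : Fin d → ℂ} (hU : ∀ y x, U y x = if y = π x then c x else 0)
    (ρ : Matrix (Fin d) (Fin d) ℂ) : U * deph ρ * Uᴴ = deph (U * ρ * Uᴴ) := by
  ext y z
  rw [mul_mul_conjTranspose_apply_of_monomial hU]
  by_cases hyz : y = z
  · subst hyz
    simp [deph, mul_mul_conjTranspose_apply_of_monomial hU]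
  · simp [deph, diagonal_apply_ne _ hyz, π.symm.injective.ne hyz]

theorem eq_of_apply_ne_zero_of_mul_deph_mul_conjTranspose {d : ℕ} {U : Matrix (Fin d) (Fin d) ℂ}
    (h : ∀ ρ, U * deph ρ * Uᴴ = deph (U * ρ * Uᴴ)) (x y z : Fin d)
    (hy : U y x ≠ 0) (hz : U z x ≠ 0) : y = z := by
  by_contra hyz
  have hsingle : deph (single x x 1) = single x x 1 := by
    rw [deph, ← diagonal_single]
    congr 1
    ext i
    simp [Pi.single_apply, eq_comm]
  have := congr_fun₂ (h (single x x 1)) y z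
  rw [hsingle, mul_single_mul_conjTranspose_apply, deph, diagonal_apply_ne _ hyz] at this
  exact mul_ne_zero hy (star_ne_zero.mpr hz) this

theorem stmt_0_general (d : ℕ) (U : Matrix (Fin d) (Fin d) ℂ)
    (hU : U ∈ Matrix.unitaryGroup (Fin d) ℂ) :
    (∀ ρ : Matrix (Fin d) (Fin d) ℂ, U * deph ρ * Uᴴ = deph (U * ρ * Uᴴ)) ↔
      ∃ (π : Equiv.Perm (Fin d)) (θ : Fin d → ℝ),
        ∀ y x, U y x = if y = π x then Complex.exp (Complex.I * (θ x : ℂ)) else 0 := by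
  constructor
  · intro h
    obtain ⟨π, c, hc, hUc⟩ := exists_monomial_of_mem_unitaryGroup hU
      (eq_of_apply_ne_zero_of_mul_deph_mul_conjTranspose h)
    choose θ hθ using fun x => (Complex.norm_eq_one_iff (c x)).mp (hc x)
    refine ⟨π, θ, fun y x => ?_⟩
    rw [hUc, ← hθ, mul_comm]
  · rintro ⟨π, θ, hUθ⟩
    exact mul_deph_mul_conjTranspose_of_monomial hUθ

/-- A unitary `U` commutes with the dephasing map iff `U` is an incoherent unitary,
i.e. `U = Σ_x e^{iθ_x} |π(x)⟩⟨x|` for a permutation `π` and real phases `θ`. -/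
theorem stmt_0 (d : ℕ) (hd : 1 ≤ d) (U : Matrix (Fin d) (Fin d) ℂ)
    (hU : U ∈ Matrix.unitaryGroup (Fin d) ℂ) :
    (∀ ρ : Matrix (Fin d) (Fin d) ℂ, U * deph ρ * Uᴴ = deph (U * ρ * Uᴴ)) ↔
      ∃ (π : Equiv.Perm (Fin d)) (θ : Fin d → ℝ),
        ∀ y x, U y x = if y = π x then Complex.exp (Complex.I * (θ x : ℂ)) else 0 :=
  stmt_0_general d U hU
end

section
/- Let M be a d×d complex matrix. Then M Δ(X) M† = Δ(M X M†) holds for every d×d complex matrix X if and only if M is an SIO Kraus operator, i.e., there exist a permutation π of Fin d and coefficients c : Fin d → ℂ such that M = Σ_x c_x |π(x)⟩⟨x|. -/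
/-!
Testing `M Δ(X) M† = Δ(M X M†)` on the matrix units `|z⟩⟨w|` turns it into the entrywise
condition `M a z * conj (M b w) ≠ 0 → (z = w ↔ a = b)`: no column and no row of `M` has two
nonzero entries. The nonzero pattern of `M` is then the graph of a partial bijection of `Fin d`,
which extends to a permutation `π` with `M = Σ_x M (π x) x |π x⟩⟨x|`.
-/

open Matrix

/-- An SIO Kraus operator: `M = Σ_x c_x |π(x)⟩⟨x|` for a permutation `π` and
coefficients `c`. -/
def IsSIOKraus {d : ℕ} (M : Matrix (Fin d) (Fin d) ℂ) : Prop :=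
  ∃ (π : Equiv.Perm (Fin d)) (c : Fin d → ℂ),
    M = ∑ x, Matrix.single (π x) x (c x)

theorem Equiv.Perm.exists_forall_rel_imp_eq_apply {α : Type*} [Finite α] (R : α → α → Prop)
    (hcol : ∀ a b x, R a x → R b x → a = b) (hrow : ∀ a x y, R a x → R a y → x = y) :
    ∃ π : Equiv.Perm α, ∀ a x, R a x → a = π x := by
  classical
  let f : {x // ∃ a, R a x} → α := fun x => x.2.choose
  have hf : Function.Injective f := fun x y hxy =>
    Subtype.ext <| hrow (f x) x y x.2.choose_spec (hxy ▸ y.2.choose_spec)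
  refine ⟨(Equiv.ofInjective f hf).extendSubtype, fun a x hax => ?_⟩
  rw [Equiv.extendSubtype_apply_of_mem _ _ ⟨a, hax⟩]
  exact hcol _ _ _ hax (Exists.choose_spec (p := (R · x)) ⟨a, hax⟩)

namespace Matrix

variable {n α : Type*} [Fintype n] [DecidableEq n]

theorem sum_single_perm_apply [AddCommMonoid α] (π : Equiv.Perm n) (c : n → α) (a b : n) :
    (∑ x, single (π x) x (c x)) a b = if a = π b then c b else 0 := by
  rw [sum_apply, Finset.sum_eq_single b] <;> simp +contextual [single_apply, eq_comm]

theorem eq_sum_single_perm [AddCommMonoid α] (M : Matrix n n α) (π : Equiv.Perm n)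
    (hM : ∀ a x, M a x ≠ 0 → a = π x) : M = ∑ x, single (π x) x (M (π x) x) := by
  ext a b
  rw [sum_single_perm_apply]
  split_ifs with hab
  · rw [hab]
  · by_contra hne
    exact hab (hM a b hne)

theorem mul_single_mul_apply {l o : Type*} [NonUnitalNonAssocSemiring α] (A : Matrix l n α)
    (z w : n) (x : α) (B : Matrix n o α) (a : l) (b : o) :
    (A * single z w x * B) a b = A a z * x * B w b := by
  simp [mul_apply, single, Finset.sum_ite_eq, ite_and]

end Matrix

section Dephasing

variable {d : ℕ}

theorem deph_apply (A : Matrix (Fin d) (Fin d) ℂ) (a b : Fin d) :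
    deph A a b = if a = b then A a b else 0 := by
  rcases eq_or_ne a b with rfl | h <;> simp [deph, *]

theorem deph_add (A B : Matrix (Fin d) (Fin d) ℂ) : deph (A + B) = deph A + deph B :=
  (diagonal_add _ _).symm

theorem deph_single (z w : Fin d) (x : ℂ) :
    deph (single z w x) = if z = w then single z w x else 0 := by
  ext a b
  rw [deph_apply]
  split_ifs <;> simp [single] <;> grind

theorem mul_deph_single_mul_conjTranspose_apply (M : Matrix (Fin d) (Fin d) ℂ) (z w : Fin d)
    (x : ℂ) (a b : Fin d) :
    (M * deph (single z w x) * Mᴴ) a b = if z = w then M a z * x * star (M b w) else 0 := by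
  rw [deph_single]
  split_ifs <;> simp [mul_single_mul_apply]

theorem deph_mul_single_mul_conjTranspose_apply (M : Matrix (Fin d) (Fin d) ℂ) (z w : Fin d)
    (x : ℂ) (a b : Fin d) :
    deph (M * single z w x * Mᴴ) a b = if a = b then M a z * x * star (M b w) else 0 := by
  rw [deph_apply, mul_single_mul_apply, conjTranspose_apply]

theorem mul_deph_mul_conjTranspose_eq_iff (M : Matrix (Fin d) (Fin d) ℂ) :
    (∀ X, M * deph X * Mᴴ = deph (M * X * Mᴴ)) ↔
      ∀ z w a b, M a z ≠ 0 → M b w ≠ 0 → (z = w ↔ a = b) := by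
  constructor
  · intro h z w a b hz hw
    have hentry := congrFun (congrFun (h (single z w 1)) a) b
    rw [mul_deph_single_mul_conjTranspose_apply,
      deph_mul_single_mul_conjTranspose_apply] at hentry
    have hprod : M a z * 1 * star (M b w) ≠ 0 := by simp [hz, hw]
    split_ifs at hentry <;> simp_all
  · intro h X
    induction X using Matrix.induction_on' with
    | h_zero => simp [deph]
    | h_add p q hp hq => simp only [deph_add, mul_add, add_mul, hp, hq]
    | h_std_basis z w x =>
      ext a b
      rw [mul_deph_single_mul_conjTranspose_apply, deph_mul_single_mul_conjTranspose_apply]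
      by_cases hz : M a z = 0
      · simp [hz]
      by_cases hw : M b w = 0
      · simp [hw]
      exact if_congr (h z w a b hz hw) rfl rfl

end Dephasing

/-- `M Δ(X) M† = Δ(M X M†)` for all `X` iff `M` is an SIO Kraus operator. -/
theorem stmt_2 (d : ℕ) (M : Matrix (Fin d) (Fin d) ℂ) :
    (∀ X : Matrix (Fin d) (Fin d) ℂ, M * deph X * Mᴴ = deph (M * X * Mᴴ)) ↔
      IsSIOKraus M := by
  rw [mul_deph_mul_conjTranspose_eq_iff]
  constructor
  · intro h
    obtain ⟨π, hπ⟩ := Equiv.Perm.exists_forall_rel_imp_eq_apply (fun a x => M a x ≠ 0)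
      (fun a b z ha hb => (h z z a b ha hb).1 rfl) (fun a z w hz hw => (h z w a a hz hw).2 rfl)
    exact ⟨π, fun x => M (π x) x, M.eq_sum_single_perm π hπ⟩
  · rintro ⟨π, c, rfl⟩ z w a b hz hw
    rw [sum_single_perm_apply] at hz hw
    obtain rfl : a = π z := by by_contra h; simp [h] at hz
    obtain rfl : b = π w := by by_contra h; simp [h] at hw
    exact π.injective.eq_iff.symm
end

section
/- Let ψ, φ ∈ ℂ^d be unit vectors and set p_x = |ψ_x|² and q_x = |φ_x|². The following are equivalent: (i) there exists a finite family (M_α) of SIO Kraus operators on ℂ^d with Σ_α M_α† M_α = I such that for each α there is a scalar c_α ∈ ℂ with M_α ψ = c_α φ (so the corresponding SIO channel maps ψψ† to φφ†); (ii) the vector p is majorized by q, i.e., there exists a d×d doubly stochastic matrix D (nonnegative entries, every row sum and column sum equal to 1) with p = D q. -/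
/-! An SIO Kraus operator is `P_{π⁻¹} · diag c`. Hence a family `M_α = P_{π_α⁻¹} · diag c_α` is
complete iff `∑_α |c_α x|² = 1` for every `x`, and `M_α ψ = s_α φ` iff
`c_α x ψ_x = s_α φ_{π_α x}`. Taking squared moduli and summing over `α` turns a conversion
into a mixture of permutations `p = ∑_α |s_α|² (q ∘ π_α)`, whose weights sum to `1` because `p`
and `q` do. Conversely, a mixture `p = ∑_α w_α (q ∘ π_α)` is realised by
`c_α x = √w_α φ_{π_α x} / ψ_x` (and `c_α x = √w_α` when `ψ_x = 0`, in which case every term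
`w_α q_{π_α x}` vanishes). By Birkhoff's theorem such mixtures are exactly the vectors `D q` with
`D` doubly stochastic. -/

open Matrix

section PermDiagonal

variable {m R : Type*} [Fintype m] [DecidableEq m]

lemma sum_single_perm_eq_permMatrix_mul_diagonal [NonAssocSemiring R] (π : Equiv.Perm m)
    (c : m → R) : ∑ x, single (π x) x (c x) = π⁻¹.permMatrix R * diagonal c := by
  ext i j
  rw [Matrix.sum_apply,
    Finset.sum_eq_single j (fun x _ hx => single_apply_of_col_ne _ _ hx _) (by simp)]
  simp [single_apply, PEquiv.toMatrix_apply, Equiv.toPEquiv_apply, Equiv.symm_apply_eq,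
    eq_comm (a := i)]

lemma sum_single_perm_mulVec [CommRing R] (π : Equiv.Perm m) (c v : m → R) :
    (∑ x, single (π x) x (c x)) *ᵥ v = (c * v) ∘ ⇑π⁻¹ := by
  rw [sum_single_perm_eq_permMatrix_mul_diagonal, ← mulVec_mulVec, permMatrix_mulVec]
  ext i
  simp [mulVec_diagonal]

lemma sum_single_perm_mulVec_eq_smul_iff [CommRing R] (π : Equiv.Perm m) (c ψ φ : m → R)
    (s : R) : (∑ x, single (π x) x (c x)) *ᵥ ψ = s • φ ↔ ∀ x, c x * ψ x = s * φ (π x) := by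
  rw [sum_single_perm_mulVec, funext_iff, π.symm.forall_congr_left]
  simp

lemma conjTranspose_sum_single_perm_mul_self [CommRing R] [StarRing R] (π : Equiv.Perm m)
    (c : m → R) :
    (∑ x, single (π x) x (c x))ᴴ * ∑ x, single (π x) x (c x) = diagonal (star c * c) := by
  rw [sum_single_perm_eq_permMatrix_mul_diagonal, conjTranspose_mul, conjTranspose_permMatrix,
    diagonal_conjTranspose, Matrix.mul_assoc, ← Matrix.mul_assoc (π⁻¹⁻¹.permMatrix R),
    ← permMatrix_mul]
  simp

lemma sum_conjTranspose_sum_single_perm_mul_self_eq_one_iff {ι : Type*} [Fintype ι]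
    (π : ι → Equiv.Perm m) (c : ι → m → ℂ) :
    ∑ α, (∑ x, single (π α x) x (c α x))ᴴ * ∑ x, single (π α x) x (c α x) = 1 ↔
      ∀ x, ∑ α, Complex.normSq (c α x) = 1 := by
  simp_rw [conjTranspose_sum_single_perm_mul_self, ← diagonalAddMonoidHom_apply, ← map_sum,
    diagonalAddMonoidHom_apply, ← diagonal_one, diagonal_eq_diagonal_iff, Finset.sum_apply,
    Pi.mul_apply, Pi.star_apply, Complex.star_def, ← Complex.normSq_eq_conj_mul_self,
    ← Complex.ofReal_sum, Complex.ofReal_eq_one]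

end PermDiagonal

lemma exists_sioKraus_family_iff {d : ℕ} (ψ φ : Fin d → ℂ) :
    (∃ (n : ℕ) (M : Fin n → Matrix (Fin d) (Fin d) ℂ),
        (∀ α, IsSIOKraus (M α)) ∧ (∑ α, (M α)ᴴ * M α = 1) ∧
        ∀ α, ∃ c : ℂ, (M α).mulVec ψ = c • φ) ↔
      ∃ (n : ℕ) (π : Fin n → Equiv.Perm (Fin d)) (c : Fin n → Fin d → ℂ) (s : Fin n → ℂ),
        (∀ x, ∑ α, Complex.normSq (c α x) = 1) ∧ ∀ α x, c α x * ψ x = s α * φ (π α x) := by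
  constructor
  · rintro ⟨n, M, hM, hcomplete, hmap⟩
    choose π c hM using hM
    choose s hs using hmap
    obtain rfl : M = fun α => ∑ x, single (π α x) x (c α x) := funext hM
    exact ⟨n, π, c, s, (sum_conjTranspose_sum_single_perm_mul_self_eq_one_iff π c).1 hcomplete,
      fun α => (sum_single_perm_mulVec_eq_smul_iff _ _ _ _ _).1 (hs α)⟩
  · rintro ⟨n, π, c, s, hc, hcs⟩
    exact ⟨n, fun α => ∑ x, single (π α x) x (c α x), fun α => ⟨π α, c α, rfl⟩,
      (sum_conjTranspose_sum_single_perm_mul_self_eq_one_iff π c).2 hc,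
      fun α => ⟨s α, (sum_single_perm_mulVec_eq_smul_iff _ _ _ _ _).2 (hcs α)⟩⟩

section PermMixture

variable {m ι : Type*} [Fintype ι]

lemma sum_smul_permMatrix_mulVec [Fintype m] [DecidableEq m] {R : Type*} [CommRing R]
    (w : ι → R) (π : ι → Equiv.Perm m) (q : m → R) :
    (∑ α, w α • (π α).permMatrix R) *ᵥ q = fun x => ∑ α, w α * q (π α x) := by
  ext x
  simp [sum_mulVec, smul_mulVec, permMatrix_mulVec]

lemma exists_doublyStochastic_mulVec_eq_iff [Fintype m] [DecidableEq m] {R : Type*} [Field R]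
    [LinearOrder R] [IsStrictOrderedRing R] {p q : m → R} :
    (∃ D ∈ doublyStochastic R m, p = D *ᵥ q) ↔
      ∃ (n : ℕ) (w : Fin n → R) (π : Fin n → Equiv.Perm m),
        (∀ α, 0 ≤ w α) ∧ ∑ α, w α = 1 ∧ ∀ x, p x = ∑ α, w α * q (π α x) := by
  constructor
  · rintro ⟨D, hD, rfl⟩
    obtain ⟨w, hw0, hw1, rfl⟩ := exists_eq_sum_perm_of_mem_doublyStochastic hD
    let e := (Fintype.equivFin (Equiv.Perm m)).symm
    refine ⟨_, w ∘ e, e, fun α => hw0 _, by rwa [Function.comp_def, e.sum_comp], fun x => ?_⟩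
    rw [congrFun (sum_smul_permMatrix_mulVec w (fun σ => σ) q) x]
    exact (e.sum_comp fun σ => w σ * q (σ x)).symm
  · rintro ⟨n, w, π, hw0, hw1, hp⟩
    refine ⟨∑ α, w α • (π α).permMatrix R,
      convex_doublyStochastic.sum_mem (fun α _ => hw0 α) hw1
        fun α _ => permMatrix_mem_doublyStochastic, ?_⟩
    rw [sum_smul_permMatrix_mulVec]
    exact funext hp

lemma sum_eq_one_of_eq_sum_comp_perm [Fintype m] {p q : m → ℝ} {w : ι → ℝ}
    {π : ι → Equiv.Perm m} (hp : ∑ x, p x = 1) (hq : ∑ x, q x = 1)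
    (h : ∀ x, p x = ∑ α, w α * q (π α x)) : ∑ α, w α = 1 := by
  calc ∑ α, w α = ∑ α, w α * ∑ x, q (π α x) := by simp [(π _).sum_comp, hq]
    _ = ∑ x, p x := by simp only [h, Finset.mul_sum]; exact Finset.sum_comm
    _ = 1 := hp

lemma normSq_eq_sum_of_mul_eq_mul {π : ι → Equiv.Perm m} {c : ι → m → ℂ} {s : ι → ℂ}
    {ψ φ : m → ℂ} (hc : ∀ x, ∑ α, Complex.normSq (c α x) = 1)
    (hcs : ∀ α x, c α x * ψ x = s α * φ (π α x)) (x : m) :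
    Complex.normSq (ψ x) = ∑ α, Complex.normSq (s α) * Complex.normSq (φ (π α x)) := by
  calc Complex.normSq (ψ x) = (∑ α, Complex.normSq (c α x)) * Complex.normSq (ψ x) := by
        rw [hc, one_mul]
    _ = _ := by simp only [Finset.sum_mul, ← Complex.normSq_mul, hcs]

lemma exists_mul_eq_mul_of_normSq_eq_sum {ψ φ : m → ℂ} {w : ι → ℝ} {π : ι → Equiv.Perm m}
    (hw0 : ∀ α, 0 ≤ w α) (hw1 : ∑ α, w α = 1)
    (h : ∀ x, Complex.normSq (ψ x) = ∑ α, w α * Complex.normSq (φ (π α x))) :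
    ∃ c : ι → m → ℂ, (∀ x, ∑ α, Complex.normSq (c α x) = 1) ∧
      ∀ α x, c α x * ψ x = √(w α) * φ (π α x) := by
  refine ⟨fun α x => if ψ x = 0 then √(w α) else √(w α) * φ (π α x) / ψ x, fun x => ?_,
    fun α x => ?_⟩
  · by_cases hx : ψ x = 0
    · simp [hx, Real.mul_self_sqrt (hw0 _), hw1]
    · have hpx : Complex.normSq (ψ x) ≠ 0 := by simpa using hx
      simp [hx, Real.mul_self_sqrt (hw0 _), ← Finset.sum_div, ← h, hpx]
  · by_cases hx : ψ x = 0
    · have hterm : w α * Complex.normSq (φ (π α x)) = 0 :=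
        (Finset.sum_eq_zero_iff_of_nonneg (f := fun β => w β * Complex.normSq (φ (π β x)))
          fun β _ => mul_nonneg (hw0 β) (Complex.normSq_nonneg _)).1
          (by rw [← h, hx, map_zero]) α (Finset.mem_univ _)
      rcases mul_eq_zero.1 hterm with hw | hφ
      · simp [hx, hw]
      · simp [hx, Complex.normSq_eq_zero.1 hφ]
    · simp [hx]

end PermMixture

/-- The pure state `ψ` can be converted to `φ` by a strictly incoherent operation
iff `(|ψ_x|²)_x` is majorized by `(|φ_x|²)_x`, i.e. `p = D q` for some doubly
stochastic `D`. -/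
theorem stmt_3 (d : ℕ) (ψ φ : Fin d → ℂ)
    (hψ : ∑ x, Complex.normSq (ψ x) = 1) (hφ : ∑ x, Complex.normSq (φ x) = 1) :
    (∃ (n : ℕ) (M : Fin n → Matrix (Fin d) (Fin d) ℂ),
        (∀ α, IsSIOKraus (M α)) ∧ (∑ α, (M α)ᴴ * M α = 1) ∧
        ∀ α, ∃ c : ℂ, (M α).mulVec ψ = c • φ) ↔
    (∃ D : Matrix (Fin d) (Fin d) ℝ,
        (∀ i j, 0 ≤ D i j) ∧ (∀ i, ∑ j, D i j = 1) ∧ (∀ j, ∑ i, D i j = 1) ∧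
        ∀ x, Complex.normSq (ψ x) = ∑ y, D x y * Complex.normSq (φ y)) := by
  have hD := exists_doublyStochastic_mulVec_eq_iff (p := fun x => Complex.normSq (ψ x))
    (q := fun y => Complex.normSq (φ y))
  simp only [mem_doublyStochastic_iff_sum, funext_iff, mulVec, dotProduct, and_assoc] at hD
  rw [exists_sioKraus_family_iff, hD]
  constructor
  · rintro ⟨n, π, c, s, hc, hcs⟩
    have hmix := normSq_eq_sum_of_mul_eq_mul hc hcs
    exact ⟨n, fun α => Complex.normSq (s α), π, fun _ => Complex.normSq_nonneg _,
      sum_eq_one_of_eq_sum_comp_perm hψ hφ hmix, hmix⟩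
  · rintro ⟨n, w, π, hw0, hw1, hmix⟩
    obtain ⟨c, hc, hcs⟩ := exists_mul_eq_mul_of_normSq_eq_sum hw0 hw1 hmix
    exact ⟨n, π, c, _, hc, hcs⟩
end

section
/- Let (M_j) be a Kraus family of 2×2 complex matrices such that Σ_j M_j |x⟩⟨x| M_j† is diagonal for x ∈ {0,1}, and let E(ρ) = Σ_j M_j ρ M_j†. Then for every 2×2 density matrix ρ, C_{Δ,R}(E(ρ)) ≤ C_{Δ,R}(ρ), i.e., inf{t ≥ 0 : (1+t)Δ(E(ρ)) − E(ρ) is positive semidefinite} ≤ inf{t ≥ 0 : (1+t)Δ(ρ) − ρ is positive semidefinite}. -/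
/-!
Let `E` be the Kraus map and `R := 2 Δ - id`. In dimension two `R(Y) = Z Y Zᴴ` with
`Z = diag(1, -1)`, so `R` preserves positivity. For `t ≥ 1` and `σ ⪰ 0`,
`(1 + t) Δ(σ) - σ = ((1 + t) / 2) R(σ) + ((t - 1) / 2) σ ⪰ 0`.
For `t ≤ 1` and `W = (1 + t) Δ(ρ) - ρ ⪰ 0`, the MIO condition `Δ ∘ E ∘ Δ = E ∘ Δ`
together with `Δ(W) = t Δ(ρ)` gives
`(1 + t) Δ(E ρ) - E ρ = ((1 + t) / 2) R(E(R W)) + ((1 - t) / 2) E(W)`,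
again a nonnegative combination of positive matrices. So every `t` admissible for `ρ` is
admissible for `E ρ`.
-/

open Matrix ComplexOrder

/-- The Δ-robustness of coherence
`C_{Δ,R}(ρ) = inf {t ≥ 0 : (1+t)Δ(ρ) − ρ ⪰ 0}`. -/
noncomputable def CDR {d : ℕ} (ρ : Matrix (Fin d) (Fin d) ℂ) : ℝ :=
  sInf {t : ℝ | 0 ≤ t ∧ (((1 + t : ℝ) : ℂ) • deph ρ - ρ).PosSemidef}

section Dephasing

variable {d : ℕ}

theorem deph_sub (X Y : Matrix (Fin d) (Fin d) ℂ) : deph (X - Y) = deph X - deph Y :=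
  (diagonal_sub _ _).symm

theorem deph_smul (c : ℂ) (X : Matrix (Fin d) (Fin d) ℂ) : deph (c • X) = c • deph X :=
  diagonal_smul c fun x => X x x

@[simp]
theorem deph_deph (X : Matrix (Fin d) (Fin d) ℂ) : deph (deph X) = deph X := by
  simp [deph]

theorem deph_eq_sum_single (X : Matrix (Fin d) (Fin d) ℂ) :
    deph X = ∑ x, X x x • single x x (1 : ℂ) := by
  simp_rw [smul_single, smul_eq_mul, mul_one]
  exact (sum_single_eq_diagonal _).symm

theorem Matrix.IsDiag.deph_eq {X : Matrix (Fin d) (Fin d) ℂ} (h : X.IsDiag) : deph X = X :=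
  h.diagonal_diag

end Dephasing

def krausMap {ι : Type*} [Fintype ι] {d : ℕ} (M : ι → Matrix (Fin d) (Fin d) ℂ) :
    Matrix (Fin d) (Fin d) ℂ →ₗ[ℂ] Matrix (Fin d) (Fin d) ℂ where
  toFun X := ∑ j, M j * X * (M j)ᴴ
  map_add' X Y := by simp [Matrix.mul_add, Matrix.add_mul, Finset.sum_add_distrib]
  map_smul' c X := by simp [Finset.smul_sum]

section Kraus

variable {ι : Type*} [Fintype ι] {d : ℕ} (M : ι → Matrix (Fin d) (Fin d) ℂ)

theorem krausMap_apply (X : Matrix (Fin d) (Fin d) ℂ) :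
    krausMap M X = ∑ j, M j * X * (M j)ᴴ := rfl

theorem krausMap_posSemidef {X : Matrix (Fin d) (Fin d) ℂ} (hX : X.PosSemidef) :
    (krausMap M X).PosSemidef :=
  posSemidef_sum _ fun j _ => hX.mul_mul_conjTranspose_same (M j)

variable {M}

theorem deph_krausMap_deph (hMIO : ∀ x, (krausMap M (single x x 1)).IsDiag)
    (X : Matrix (Fin d) (Fin d) ℂ) : deph (krausMap M (deph X)) = krausMap M (deph X) := by
  refine IsDiag.deph_eq ?_
  rw [deph_eq_sum_single, map_sum]
  exact Finset.sum_induction _ IsDiag (fun _ _ => IsDiag.add) isDiag_zero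
    fun x _ => by rw [map_smul]; exact (hMIO x).smul _

end Kraus

theorem Matrix.PosSemidef.two_smul_deph_sub {Y : Matrix (Fin 2) (Fin 2) ℂ}
    (hY : Y.PosSemidef) : ((2 : ℂ) • deph Y - Y).PosSemidef := by
  have hconj : (2 : ℂ) • deph Y - Y = diagonal ![1, -1] * Y * (diagonal ![1, -1])ᴴ := by
    ext i j
    fin_cases i <;> fin_cases j <;> simp [deph] <;> ring
  rw [hconj]
  exact hY.mul_mul_conjTranspose_same _

theorem Matrix.PosSemidef.smul_deph_sub_of_one_le {σ : Matrix (Fin 2) (Fin 2) ℂ}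
    (hσ : σ.PosSemidef) {t : ℝ} (ht : 1 ≤ t) :
    (((1 + t : ℝ) : ℂ) • deph σ - σ).PosSemidef := by
  have hdecomp : ((1 + t : ℝ) : ℂ) • deph σ - σ =
      (((1 + t) / 2 : ℝ) : ℂ) • ((2 : ℂ) • deph σ - σ)
        + (((t - 1) / 2 : ℝ) : ℂ) • σ := by
    push_cast
    module
  rw [hdecomp]
  exact (hσ.two_smul_deph_sub.smul (Complex.zero_le_real.mpr (by linarith))).add
    (hσ.smul (Complex.zero_le_real.mpr (by linarith)))

theorem Matrix.PosSemidef.smul_deph_sub_krausMap {ι : Type*} [Fintype ι]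
    {M : ι → Matrix (Fin 2) (Fin 2) ℂ} (hMIO : ∀ x, (krausMap M (single x x 1)).IsDiag)
    {ρ : Matrix (Fin 2) (Fin 2) ℂ} {t : ℝ} (ht0 : 0 ≤ t) (ht1 : t ≤ 1)
    (hW : (((1 + t : ℝ) : ℂ) • deph ρ - ρ).PosSemidef) :
    (((1 + t : ℝ) : ℂ) • deph (krausMap M ρ) - krausMap M ρ).PosSemidef := by
  set W := ((1 + t : ℝ) : ℂ) • deph ρ - ρ with hW_def
  have hdecomp : ((1 + t : ℝ) : ℂ) • deph (krausMap M ρ) - krausMap M ρ =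
      (((1 + t) / 2 : ℝ) : ℂ) • ((2 : ℂ) • deph (krausMap M ((2 : ℂ) • deph W - W))
        - krausMap M ((2 : ℂ) • deph W - W))
        + (((1 - t) / 2 : ℝ) : ℂ) • krausMap M W := by
    simp only [hW_def, map_sub, map_smul, deph_sub, deph_smul, deph_deph,
      deph_krausMap_deph hMIO]
    push_cast
    module
  rw [hdecomp]
  exact ((krausMap_posSemidef M hW.two_smul_deph_sub).two_smul_deph_sub.smul
    (Complex.zero_le_real.mpr (by linarith))).add
    ((krausMap_posSemidef M hW).smul (Complex.zero_le_real.mpr (by linarith)))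

theorem stmt_7_general (n : ℕ) (M : Fin n → Matrix (Fin 2) (Fin 2) ℂ)
    (hMIO : ∀ x : Fin 2, (∑ j, M j * Matrix.single x x (1 : ℂ) * (M j)ᴴ).IsDiag)
    (ρ : Matrix (Fin 2) (Fin 2) ℂ) (hρ : ρ.PosSemidef) :
    CDR (∑ j, M j * ρ * (M j)ᴴ) ≤ CDR ρ := by
  simp_rw [← krausMap_apply] at hMIO ⊢
  refine csInf_le_csInf ⟨0, fun t ht => ht.1⟩
    ⟨1, zero_le_one, hρ.smul_deph_sub_of_one_le le_rfl⟩ ?_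
  rintro t ⟨ht0, hW : PosSemidef _⟩
  refine ⟨ht0, ?_⟩
  rcases le_total t 1 with ht1 | ht1
  · exact hW.smul_deph_sub_krausMap hMIO ht0 ht1
  · exact (krausMap_posSemidef M hρ).smul_deph_sub_of_one_le ht1

/-- The Δ-robustness of coherence is monotone under qubit MIO channels. -/
theorem stmt_7 (n : ℕ) (M : Fin n → Matrix (Fin 2) (Fin 2) ℂ)
    (hK : ∑ j, (M j)ᴴ * M j = 1)
    (hMIO : ∀ x : Fin 2, (∑ j, M j * Matrix.single x x (1 : ℂ) * (M j)ᴴ).IsDiag)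
    (ρ : Matrix (Fin 2) (Fin 2) ℂ) (hρ : ρ.PosSemidef) (htr : ρ.trace = 1) :
    CDR (∑ j, M j * ρ * (M j)ᴴ) ≤ CDR ρ :=
  stmt_7_general n M hMIO ρ hρ
end

section
/- Let d ≥ 1, let α ∈ (1, 2], and let a : Fin d → ℝ with a_x > 0 for all x. Then the infimum of Σ_x a_x · q_x^{1−α} over all q : Fin d → ℝ with q_x > 0 for all x and Σ_x q_x = 1 equals (Σ_x a_x^{1/α})^α, and it is attained at q_x = a_x^{1/α} / (Σ_{x'} a_{x'}^{1/α}). -/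
/-!
With `z_x = a_x^{1/α} / q_x` one has `a_x q_x^{1-α} = q_x z_x^α`, so the objective is the
`q`-average of `z^α`. By Jensen's inequality for the convex function `t ↦ t^α` it is at least
`(Σ_x q_x z_x)^α = (Σ_x a_x^{1/α})^α`, with equality when `z` is constant, i.e. when `q_x` is
proportional to `a_x^{1/α}`.
-/

open Finset

namespace Real

theorem mul_rpow_one_sub_eq_mul_div_rpow {a q α : ℝ} (ha : 0 ≤ a) (hq : 0 < q) (hα : α ≠ 0) :
    a * q ^ (1 - α) = q * (a ^ (1 / α) / q) ^ α := by
  rw [div_rpow (rpow_nonneg ha _) hq.le, one_div, rpow_inv_rpow ha hα, rpow_sub hq, rpow_one]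
  ring

variable {ι : Type*} (s : Finset ι) {α : ℝ} (a q : ι → ℝ)

theorem rpow_sum_rpow_one_div_le_sum_mul_rpow_one_sub (hα : 1 ≤ α) (ha : ∀ i ∈ s, 0 ≤ a i)
    (hq : ∀ i ∈ s, 0 < q i) (hq₁ : ∑ i ∈ s, q i = 1) :
    (∑ i ∈ s, a i ^ (1 / α)) ^ α ≤ ∑ i ∈ s, a i * q i ^ (1 - α) := by
  have hα₀ : α ≠ 0 := by positivity
  have hz : ∀ i ∈ s, 0 ≤ a i ^ (1 / α) / q i := fun i hi =>
    div_nonneg (rpow_nonneg (ha i hi) _) (hq i hi).le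
  have hmean : ∑ i ∈ s, q i * (a i ^ (1 / α) / q i) = ∑ i ∈ s, a i ^ (1 / α) :=
    sum_congr rfl fun i hi => mul_div_cancel₀ _ (hq i hi).ne'
  calc (∑ i ∈ s, a i ^ (1 / α)) ^ α
      = (∑ i ∈ s, q i * (a i ^ (1 / α) / q i)) ^ α := by rw [hmean]
    _ ≤ ∑ i ∈ s, q i * (a i ^ (1 / α) / q i) ^ α :=
      rpow_arith_mean_le_arith_mean_rpow s q _ (fun i hi => (hq i hi).le) hq₁ hz hα
    _ = ∑ i ∈ s, a i * q i ^ (1 - α) :=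
      sum_congr rfl fun i hi => (mul_rpow_one_sub_eq_mul_div_rpow (ha i hi) (hq i hi) hα₀).symm

theorem sum_mul_rpow_one_sub_of_proportional_rpow_one_div (hα : α ≠ 0)
    (ha : ∀ i ∈ s, 0 < a i) (hS : 0 < ∑ i ∈ s, a i ^ (1 / α)) :
    ∑ i ∈ s, a i * (a i ^ (1 / α) / ∑ j ∈ s, a j ^ (1 / α)) ^ (1 - α)
      = (∑ i ∈ s, a i ^ (1 / α)) ^ α := by
  set S := ∑ i ∈ s, a i ^ (1 / α)
  have hq : ∀ i ∈ s, 0 < a i ^ (1 / α) / S := fun i hi => div_pos (rpow_pos_of_pos (ha i hi) _) hS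
  have hz : ∀ i ∈ s, a i ^ (1 / α) / (a i ^ (1 / α) / S) = S := fun i hi =>
    div_div_cancel₀ (rpow_pos_of_pos (ha i hi) _).ne'
  calc ∑ i ∈ s, a i * (a i ^ (1 / α) / S) ^ (1 - α)
      = ∑ i ∈ s, a i ^ (1 / α) / S * S ^ α := sum_congr rfl fun i hi => by
        rw [mul_rpow_one_sub_eq_mul_div_rpow (ha i hi).le (hq i hi) hα, hz i hi]
    _ = S ^ α := by rw [← sum_mul, ← sum_div, div_self hS.ne', one_mul]

end Real

theorem stmt_12_general (d : ℕ) (hd : 1 ≤ d) (α : ℝ) (hα1 : 1 < α)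
    (a : Fin d → ℝ) (ha : ∀ x, 0 < a x) :
    IsLeast {v : ℝ | ∃ q : Fin d → ℝ, (∀ x, 0 < q x) ∧ (∑ x, q x = 1) ∧
        v = ∑ x, a x * (q x) ^ (1 - α)}
      ((∑ x, (a x) ^ (1 / α)) ^ α) ∧
    (∑ x, a x * ((a x) ^ (1 / α) / ∑ x', (a x') ^ (1 / α)) ^ (1 - α))
      = (∑ x, (a x) ^ (1 / α)) ^ α := by
  have hS : 0 < ∑ x, a x ^ (1 / α) :=
    sum_pos (fun x _ => Real.rpow_pos_of_pos (ha x) _) ⟨⟨0, hd⟩, mem_univ _⟩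
  have hvalue := Real.sum_mul_rpow_one_sub_of_proportional_rpow_one_div univ a (by positivity)
    (fun x _ => ha x) hS
  refine ⟨⟨⟨fun x => a x ^ (1 / α) / ∑ x', a x' ^ (1 / α),
      fun x => div_pos (Real.rpow_pos_of_pos (ha x) _) hS,
      by rw [← sum_div, div_self hS.ne'], hvalue.symm⟩, ?_⟩, hvalue⟩
  rintro v ⟨q, hq, hq₁, rfl⟩
  exact Real.rpow_sum_rpow_one_div_le_sum_mul_rpow_one_sub univ a q hα1.le (fun x _ => (ha x).le)
    (fun x _ => hq x) hq₁

/-- The core optimization in computing the relative Rényi entropy of coherence: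
for `α ∈ (1,2]` and positive weights `a_x`, the minimum of
`Σ_x a_x q_x^{1−α}` over probability vectors `q` with positive entries is
`(Σ_x a_x^{1/α})^α`, attained at `q_x = a_x^{1/α} / Σ_{x'} a_{x'}^{1/α}`. -/
theorem stmt_12 (d : ℕ) (hd : 1 ≤ d) (α : ℝ) (hα1 : 1 < α) (hα2 : α ≤ 2)
    (a : Fin d → ℝ) (ha : ∀ x, 0 < a x) :
    IsLeast {v : ℝ | ∃ q : Fin d → ℝ, (∀ x, 0 < q x) ∧ (∑ x, q x = 1) ∧
        v = ∑ x, a x * (q x) ^ (1 - α)}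
      ((∑ x, (a x) ^ (1 / α)) ^ α) ∧
    (∑ x, a x * ((a x) ^ (1 / α) / ∑ x', (a x') ^ (1 / α)) ^ (1 - α))
      = (∑ x, (a x) ^ (1 / α)) ^ α :=
  stmt_12_general d hd α hα1 a ha
end

section
/- Let d ≥ 1 and t ∈ ℝ, and define the linear map Φ_t : M_d(ℂ) → M_d(ℂ) by Φ_t(X) = (1+t)Δ(X) − X. The following are equivalent: (i) Φ_t is positive, i.e., Φ_t(X) is positive semidefinite whenever X is positive semidefinite; (ii) Φ_t is completely positive, i.e., its Choi matrix Σ_{j,k ∈ Fin d} E_{jk} ⊗ Φ_t(E_{jk}) (a d²×d² matrix built from the standard matrix units E_{jk} via the Kronecker product, equal to (1+t)·Σ_j E_{jj} ⊗ E_{jj} − Σ_{j,k} E_{jk} ⊗ E_{jk}) is positive semidefinite; (iii) t ≥ d − 1. -/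
open Matrix ComplexOrder

/-- The map `Φ_t(X) = (1+t)Δ(X) − X`. -/
noncomputable def Phi (d : ℕ) (t : ℝ) (X : Matrix (Fin d) (Fin d) ℂ) :
    Matrix (Fin d) (Fin d) ℂ :=
  ((1 + t : ℝ) : ℂ) • deph X - X

/-!
`Φ_t` is the Schur multiplier `X ↦ X ⊙ Φ_t(J)` by `Φ_t(J) = (1+t)I − J`, where `J = of 1` is the
all-ones matrix. For a Schur multiplier `X ↦ X ⊙ M`, positivity and complete positivity both
reduce to `M ⪰ 0`: positivity by testing on `J ⪰ 0` and by the Schur product theorem, complete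
positivity because the Choi matrix is `S M Sᴴ` for the isometry `S : eₓ ↦ eₓ ⊗ eₓ`. Finally
`(1+t)I − J ⪰ 0` iff `1 + t ≥ d`, the largest eigenvalue of `J`; sufficiency because `dI − J` is
`d` times the orthogonal projection onto the complement of the all-ones vector.
-/

section SchurMultiplier

variable {𝕜 n : Type*} [RCLike 𝕜] [Fintype n]

lemma posSemidef_of_one : (of 1 : Matrix n n 𝕜).PosSemidef := by
  have : (of 1 : Matrix n n 𝕜) = vecMulVec 1 (star 1) := by ext; simp [vecMulVec]
  exact this ▸ posSemidef_vecMulVec_self_star 1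

lemma forall_posSemidef_hadamard_iff (M : Matrix n n 𝕜) :
    (∀ X : Matrix n n 𝕜, X.PosSemidef → (X ⊙ M).PosSemidef) ↔ M.PosSemidef :=
  ⟨fun h => by simpa using h _ posSemidef_of_one, fun hM _ hX => hX.hadamard hM⟩

variable [DecidableEq n]

variable (𝕜 n) in
def diagEmbedding : Matrix (n × n) n 𝕜 := of fun p x => if p = (x, x) then 1 else 0

lemma diagEmbedding_conjTranspose_mul_self :
    (diagEmbedding 𝕜 n)ᴴ * diagEmbedding 𝕜 n = 1 := by
  ext x y
  simp [diagEmbedding, mul_apply, one_apply, eq_comm]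

lemma sum_kronecker_single_hadamard (M : Matrix n n 𝕜) :
    ∑ j, ∑ k, kroneckerMap (· * ·) (single j k (1 : 𝕜)) (single j k 1 ⊙ M) =
      diagEmbedding 𝕜 n * M * (diagEmbedding 𝕜 n)ᴴ := by
  ext ⟨a, b⟩ ⟨c, e⟩
  simp [diagEmbedding, mul_apply, Matrix.sum_apply, single_apply, ite_and,
    apply_ite (starRingEnd 𝕜), Finset.sum_ite_irrel, eq_comm]
  split_ifs <;> simp_all

lemma posSemidef_sum_kronecker_single_hadamard_iff (M : Matrix n n 𝕜) :
    (∑ j, ∑ k, kroneckerMap (· * ·) (single j k (1 : 𝕜)) (single j k 1 ⊙ M)).PosSemidef ↔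
      M.PosSemidef := by
  rw [sum_kronecker_single_hadamard]
  refine ⟨fun h => ?_, fun hM => hM.mul_mul_conjTranspose_same _⟩
  have := h.conjTranspose_mul_mul_same (diagEmbedding 𝕜 n)
  simp only [Matrix.mul_assoc] at this
  rwa [diagEmbedding_conjTranspose_mul_self, Matrix.mul_one, ← Matrix.mul_assoc,
    diagEmbedding_conjTranspose_mul_self, Matrix.one_mul] at this

end SchurMultiplier

section AllOnes

variable {𝕜 n : Type*} [RCLike 𝕜] [Fintype n] [DecidableEq n] [Nonempty n]

lemma posSemidef_card_smul_one_sub_of_one :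
    ((Fintype.card n : 𝕜) • 1 - of 1 : Matrix n n 𝕜).PosSemidef := by
  set Q : Matrix n n 𝕜 := (Fintype.card n : 𝕜) • 1 - of 1
  have hJ : (of 1 : Matrix n n 𝕜) * of 1 = (Fintype.card n : 𝕜) • of 1 := by
    ext; simp [mul_apply]
  have hQ_herm : Qᴴ = Q := by
    ext i j
    by_cases h : i = j <;> simp [Q, h, one_apply, eq_comm]
  have hQ_sq : Qᴴ * Q = (Fintype.card n : 𝕜) • Q := by
    simp only [hQ_herm, Q, sub_mul, mul_sub, Matrix.smul_mul, Matrix.mul_smul, Matrix.one_mul,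
      Matrix.mul_one, hJ]
    module
  have hcard : (0 : 𝕜) < Fintype.card n := by simp [Fintype.card_pos]
  have := (posSemidef_conjTranspose_mul_self Q).smul (inv_pos.mpr hcard).le
  rwa [hQ_sq, smul_smul, inv_mul_cancel₀ hcard.ne', one_smul] at this

lemma posSemidef_smul_one_sub_of_one_iff (c : ℝ) :
    ((c : 𝕜) • 1 - of 1 : Matrix n n 𝕜).PosSemidef ↔ (Fintype.card n : ℝ) ≤ c := by
  constructor
  · intro h
    have h_ones := h.dotProduct_mulVec_nonneg 1
    have h_form : star 1 ⬝ᵥ (((c : 𝕜) • 1 - of 1 : Matrix n n 𝕜) *ᵥ 1) =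
        ((Fintype.card n * (c - Fintype.card n) : ℝ) : 𝕜) := by
      simp [dotProduct, mulVec, one_apply, RCLike.real_smul_eq_coe_mul]; ring
    rw [h_form, RCLike.ofReal_nonneg] at h_ones
    have : (0 : ℝ) < Fintype.card n := by simp [Fintype.card_pos]
    nlinarith
  · intro h
    have h_split : ((c : 𝕜) • 1 - of 1 : Matrix n n 𝕜) =
        ((c - Fintype.card n : ℝ) : 𝕜) • 1 + ((Fintype.card n : 𝕜) • 1 - of 1) := by
      push_cast; module
    rw [h_split]
    exact (PosSemidef.one.smul (RCLike.ofReal_nonneg.mpr (sub_nonneg.mpr h))).add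
      posSemidef_card_smul_one_sub_of_one

end AllOnes

lemma Phi_eq_hadamard (d : ℕ) (t : ℝ) (X : Matrix (Fin d) (Fin d) ℂ) :
    Phi d t X = X ⊙ (((1 + t : ℝ) : ℂ) • 1 - of 1) := by
  ext i j
  by_cases h : i = j
  · subst h; simp [Phi, deph]; ring
  · simp [Phi, deph, h]

/-- For `Φ_t(X) = (1+t)Δ(X) − X`, the following are equivalent: `Φ_t` is
positive; `Φ_t` is completely positive (its Choi matrix is PSD); `t ≥ d − 1`. -/
theorem stmt_13 (d : ℕ) (hd : 1 ≤ d) (t : ℝ) :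
    List.TFAE [
      (∀ X : Matrix (Fin d) (Fin d) ℂ, X.PosSemidef → (Phi d t X).PosSemidef),
      (∑ j : Fin d, ∑ k : Fin d,
        Matrix.kroneckerMap (· * ·) (Matrix.single j k (1 : ℂ))
          (Phi d t (Matrix.single j k (1 : ℂ)))).PosSemidef,
      ((d : ℝ) - 1 ≤ t)] := by
  have : Nonempty (Fin d) := ⟨⟨0, hd⟩⟩
  have h_threshold : (((1 + t : ℝ) : ℂ) • 1 - of 1 : Matrix (Fin d) (Fin d) ℂ).PosSemidef ↔
      (d : ℝ) - 1 ≤ t := by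
    refine (posSemidef_smul_one_sub_of_one_iff (1 + t)).trans ?_
    rw [Fintype.card_fin]
    constructor <;> intro <;> linarith
  simp only [Phi_eq_hadamard, forall_posSemidef_hadamard_iff,
    posSemidef_sum_kronecker_single_hadamard_iff, h_threshold]
  tfae_finish
end

section
/- Let ψ ∈ ℂ^d be a unit vector and let n = |{x ∈ Fin d : ψ_x ≠ 0}| ≥ 1 be the number of nonzero entries of ψ. Then the Δ-robustness of the pure state ψψ† equals n − 1: inf{t ≥ 0 : (1+t)Δ(ψψ†) − ψψ† is positive semidefinite} = n − 1. -/
open Matrix ComplexOrder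

/-!
The quadratic form of `c • Δ(ψψ†) - ψψ†` at `v` is `c ∑ₓ |ψₓ|²|vₓ|² - |⟪v, ψ⟫|²`.
Cauchy–Schwarz over the `n`-element support of `ψ` gives `|⟪v, ψ⟫|² ≤ n ∑ₓ |ψₓ|²|vₓ|²`, so the
matrix is positive semidefinite once `c ≥ n`. Conversely the vector `vₓ = (conj ψₓ)⁻¹` (which is
`0` off the support) attains equality, so positivity at it forces `c n - n² ≥ 0`, i.e. `c ≥ n`.
Hence the feasible `t` form the interval `[n - 1, ∞)`.
-/

open Finset

theorem Finset.sum_inv_mul_self_eq_card {ι K : Type*} [Fintype ι] [DivisionRing K]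
    (f : ι → K) [DecidablePred fun x => f x ≠ 0] :
    ∑ x, (f x)⁻¹ * f x = #{x | f x ≠ 0} := by
  rw [← sum_boole]
  refine sum_congr rfl fun x _ => ?_
  split_ifs with h
  · exact inv_mul_cancel₀ h
  · simp_all

theorem Complex.normSq_sum_le_card_mul {ι : Type*} [Fintype ι] (f : ι → ℂ)
    [DecidablePred fun x => f x ≠ 0] :
    Complex.normSq (∑ x, f x) ≤ #{x | f x ≠ 0} * ∑ x, Complex.normSq (f x) := by
  set S : Finset ι := {x | f x ≠ 0}
  have hS : ∀ {M} [AddCommMonoid M] (g : ι → M), (∀ x, f x = 0 → g x = 0) →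
      ∑ x ∈ S, g x = ∑ x, g x := fun g hg =>
    sum_filter_of_ne fun x _ hgx => mt (hg x) hgx
  rw [← hS f fun _ => id, ← hS _ fun x hx => by simp [hx]]
  calc Complex.normSq (∑ x ∈ S, f x) = ‖∑ x ∈ S, f x‖ ^ 2 := (Complex.sq_norm _).symm
    _ ≤ (∑ x ∈ S, ‖f x‖) ^ 2 := by gcongr; exact norm_sum_le _ _
    _ ≤ #S * ∑ x ∈ S, ‖f x‖ ^ 2 := sq_sum_le_card_mul_sum_sq
    _ = #S * ∑ x ∈ S, Complex.normSq (f x) := by simp only [Complex.sq_norm]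

theorem dotProduct_vecMulVec_self_star_mulVec {ι : Type*} [Fintype ι] (ψ v : ι → ℂ) :
    star v ⬝ᵥ vecMulVec ψ (star ψ) *ᵥ v = Complex.normSq (star v ⬝ᵥ ψ) := by
  rw [vecMulVec_mulVec, op_smul_eq_smul, dotProduct_smul, star_dotProduct ψ v, smul_eq_mul,
    Complex.normSq_eq_conj_mul_self]
  rfl

theorem Matrix.IsHermitian.deph {d : ℕ} {ρ : Matrix (Fin d) (Fin d) ℂ} (hρ : ρ.IsHermitian) :
    (deph ρ).IsHermitian :=
  isHermitian_diagonal_of_self_adjoint _ <| funext fun x => hρ.apply x x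

theorem dotProduct_deph_mulVec {d : ℕ} (ρ : Matrix (Fin d) (Fin d) ℂ) (v : Fin d → ℂ) :
    star v ⬝ᵥ deph ρ *ᵥ v = ∑ x, ρ x x * Complex.normSq (v x) := by
  refine sum_congr rfl fun x _ => ?_
  rw [deph, mulVec_diagonal, Pi.star_apply, RCLike.star_def, Complex.normSq_eq_conj_mul_self]
  ring

section PureState

variable {d : ℕ} (ψ : Fin d → ℂ)

theorem dotProduct_smul_deph_sub_vecMulVec_mulVec (c : ℝ) (v : Fin d → ℂ) :
    star v ⬝ᵥ ((c : ℂ) • deph (vecMulVec ψ (star ψ)) - vecMulVec ψ (star ψ)) *ᵥ v =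
      ((c * ∑ x, Complex.normSq (ψ x) * Complex.normSq (v x)
        - Complex.normSq (star v ⬝ᵥ ψ) : ℝ) : ℂ) := by
  rw [sub_mulVec, dotProduct_sub, smul_mulVec, dotProduct_smul, dotProduct_deph_mulVec,
    dotProduct_vecMulVec_self_star_mulVec]
  simp only [vecMulVec_apply, Pi.star_apply, RCLike.star_def, Complex.mul_conj]
  push_cast
  rfl

theorem isHermitian_smul_deph_sub_vecMulVec (c : ℝ) :
    ((c : ℂ) • deph (vecMulVec ψ (star ψ)) - vecMulVec ψ (star ψ)).IsHermitian :=
  have hP := (posSemidef_vecMulVec_self_star ψ).isHermitian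
  (hP.deph.smul (Complex.conj_ofReal c)).sub hP

theorem posSemidef_smul_deph_sub_vecMulVec_iff (hψ : ψ ≠ 0) (c : ℝ) :
    ((c : ℂ) • deph (vecMulVec ψ (star ψ)) - vecMulVec ψ (star ψ)).PosSemidef ↔
      (#{x | ψ x ≠ 0} : ℝ) ≤ c := by
  constructor
  · intro hpsd
    set v : Fin d → ℂ := fun x => (star (ψ x))⁻¹
    have hvψ : star v ⬝ᵥ ψ = #{x | ψ x ≠ 0} := by
      simpa [v, dotProduct] using Finset.sum_inv_mul_self_eq_card ψ
    have hvv : ∑ x, Complex.normSq (ψ x) * Complex.normSq (v x) = #{x | ψ x ≠ 0} := by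
      simpa [v, mul_comm] using Finset.sum_inv_mul_self_eq_card fun x => Complex.normSq (ψ x)
    have hform := hpsd.dotProduct_mulVec_nonneg v
    rw [dotProduct_smul_deph_sub_vecMulVec_mulVec, Complex.zero_le_real, hvψ, hvv,
      Complex.normSq_natCast] at hform
    obtain ⟨x, hx⟩ := Function.ne_iff.mp hψ
    have hn : (0 : ℝ) < #{x | ψ x ≠ 0} :=
      Nat.cast_pos.mpr (Finset.card_pos.mpr ⟨x, by simpa using hx⟩)
    nlinarith
  · intro hc
    refine .of_dotProduct_mulVec_nonneg (isHermitian_smul_deph_sub_vecMulVec ψ c) fun v => ?_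
    rw [dotProduct_smul_deph_sub_vecMulVec_mulVec, Complex.zero_le_real, sub_nonneg]
    have hsum : 0 ≤ ∑ x, Complex.normSq (ψ x) * Complex.normSq (v x) :=
      Finset.sum_nonneg fun x _ => mul_nonneg (Complex.normSq_nonneg _) (Complex.normSq_nonneg _)
    calc Complex.normSq (star v ⬝ᵥ ψ)
        ≤ #{x | star v x * ψ x ≠ 0} * ∑ x, Complex.normSq (star v x * ψ x) :=
          Complex.normSq_sum_le_card_mul _
      _ ≤ #{x | ψ x ≠ 0} * ∑ x, Complex.normSq (ψ x) * Complex.normSq (v x) := by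
          simp only [Complex.normSq_mul, Pi.star_apply, RCLike.star_def, Complex.normSq_conj,
            mul_comm (Complex.normSq (v _))]
          gcongr ?_ * _
          exact_mod_cast card_le_card <|
            monotone_filter_right _ fun x _ h => right_ne_zero_of_mul h
      _ ≤ c * ∑ x, Complex.normSq (ψ x) * Complex.normSq (v x) := by gcongr

end PureState

theorem stmt_14_general (d : ℕ) (ψ : Fin d → ℂ)
    (n : ℕ) (hn : n = (Finset.univ.filter fun x => ψ x ≠ 0).card) (hn1 : 1 ≤ n) :
    sInf {t : ℝ | 0 ≤ t ∧
        (((1 + t : ℝ) : ℂ) • deph (Matrix.vecMulVec ψ (star ψ))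
          - Matrix.vecMulVec ψ (star ψ)).PosSemidef}
      = (n : ℝ) - 1 := by
  have hψ : ψ ≠ 0 := by
    rintro rfl
    simp only [Pi.zero_apply, ne_eq, not_true_eq_false, filter_false, card_empty] at hn
    omega
  have hn1' : (1 : ℝ) ≤ n := by exact_mod_cast hn1
  have hset : {t : ℝ | 0 ≤ t ∧
      (((1 + t : ℝ) : ℂ) • deph (vecMulVec ψ (star ψ)) - vecMulVec ψ (star ψ)).PosSemidef} =
      Set.Ici ((n : ℝ) - 1) := by
    ext t
    rw [Set.mem_ofPred_eq, posSemidef_smul_deph_sub_vecMulVec_iff ψ hψ, ← hn, Set.mem_Ici]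
    constructor
    · rintro ⟨-, h⟩
      linarith
    · intro h
      exact ⟨by linarith, by linarith⟩
  rw [hset, csInf_Ici]

/-- For a pure state `ψ` with exactly `n ≥ 1` nonzero amplitudes, the
Δ-robustness of coherence of `ψψ†` equals `n − 1`. -/
theorem stmt_14 (d : ℕ) (ψ : Fin d → ℂ) (hψ : ∑ x, Complex.normSq (ψ x) = 1)
    (n : ℕ) (hn : n = (Finset.univ.filter fun x => ψ x ≠ 0).card) (hn1 : 1 ≤ n) :
    sInf {t : ℝ | 0 ≤ t ∧
        (((1 + t : ℝ) : ℂ) • deph (Matrix.vecMulVec ψ (star ψ))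
          - Matrix.vecMulVec ψ (star ψ)).PosSemidef}
      = (n : ℝ) - 1 :=
  stmt_14_general d ψ n hn hn1
end

section
/- Let ρ be a d×d density matrix all of whose entries are real and nonnegative. Then the robustness of coherence of ρ equals its ℓ₁-coherence: inf{t ≥ 0 : there exists a positive semidefinite σ with trace 1 such that ρ + tσ is diagonal} = Σ_{j ≠ k} ρ_{jk}. -/
/-!
If `ρ + t • σ` is diagonal, then `t • σ` cancels the off-diagonal part of `ρ`, so testing
`σ ≥ 0` against the all-ones vector gives `0 ≤ t - Σ_{j ≠ k} ρ_{jk}`. Conversely, when the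
entries of `ρ` are nonnegative, the weighted graph Laplacian `diagonal (ρ *ᵥ 1) - ρ` is
positive semidefinite (its quadratic form is `½ Σ_{j,k} ρ_{jk} |x_j - x_k|²`), has trace
`Σ_{j ≠ k} ρ_{jk}`, and makes `ρ` diagonal; normalized, it attains the bound.
-/

open Matrix Finset ComplexOrder

namespace Matrix

variable {n 𝕜 : Type*} [Fintype n]

theorem IsDiag.sum_sum_eq_trace [AddCommMonoid 𝕜] {A : Matrix n n 𝕜} (hA : A.IsDiag) :
    ∑ j, ∑ k, A j k = A.trace :=
  sum_congr rfl fun j _ => sum_eq_single j (fun _ _ hkj => hA hkj.symm) (by simp)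

theorem PosSemidef.sum_sum_nonneg [CommRing 𝕜] [StarRing 𝕜] [PartialOrder 𝕜]
    {A : Matrix n n 𝕜} (hA : A.PosSemidef) : 0 ≤ ∑ j, ∑ k, A j k := by
  simpa [dotProduct, mulVec] using hA.dotProduct_mulVec_nonneg 1

variable [DecidableEq n]

def offDiagSum [AddCommMonoid 𝕜] (A : Matrix n n 𝕜) : 𝕜 :=
  ∑ j, ∑ k ∈ univ.filter (fun k => k ≠ j), A j k

theorem offDiagSum_eq_sum_sub_trace [AddCommGroup 𝕜] (A : Matrix n n 𝕜) :
    A.offDiagSum = ∑ j, ∑ k, A j k - A.trace := by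
  simp only [offDiagSum, trace, diag, eq_sub_iff_add_eq, ← sum_add_distrib, filter_ne',
    sum_erase_add _ _ (mem_univ _)]

variable [RCLike 𝕜]

theorem offDiagSum_le_of_isDiag_add_smul {ρ σ : Matrix n n 𝕜} (hσ : σ.PosSemidef)
    (hσtr : σ.trace = 1) {c : 𝕜} (hc : 0 ≤ c) (hdiag : (ρ + c • σ).IsDiag) :
    ρ.offDiagSum ≤ c := by
  have hsum := hdiag.sum_sum_eq_trace
  simp only [add_apply, smul_apply, smul_eq_mul, sum_add_distrib, ← mul_sum, trace_add,
    trace_smul, hσtr, mul_one] at hsum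
  have : c - ρ.offDiagSum = c * ∑ j, ∑ k, σ j k := by
    rw [offDiagSum_eq_sum_sub_trace]; linear_combination -hsum
  exact sub_nonneg.1 (this ▸ mul_nonneg hc hσ.sum_sum_nonneg)

def laplacian (W : Matrix n n 𝕜) : Matrix n n 𝕜 := diagonal (W *ᵥ 1) - W

theorem isDiag_add_laplacian (W : Matrix n n 𝕜) : (W + W.laplacian).IsDiag := by
  rw [laplacian, add_sub_cancel]
  exact isDiag_diagonal _

theorem trace_laplacian (W : Matrix n n 𝕜) : W.laplacian.trace = W.offDiagSum := by
  simp [laplacian, offDiagSum_eq_sum_sub_trace, mulVec, dotProduct]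

theorem dotProduct_laplacian_mulVec (W : Matrix n n 𝕜) (x : n → 𝕜) :
    star x ⬝ᵥ W.laplacian *ᵥ x = ∑ j, ∑ k, W j k * (star (x j) * (x j - x k)) := by
  rw [laplacian, sub_mulVec, dotProduct_sub]
  simp only [dotProduct, mulVec_diagonal]
  simp only [dotProduct, mulVec, Pi.star_apply, Pi.one_apply, mul_one,
    ← sum_sub_distrib, mul_sum, sum_mul]
  refine sum_congr rfl fun j _ => sum_congr rfl fun k _ => by ring

theorem dotProduct_laplacian_mulVec_of_symm {W : Matrix n n 𝕜} (hW : Wᵀ = W) (x : n → 𝕜) :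
    star x ⬝ᵥ W.laplacian *ᵥ x = 2⁻¹ * ∑ j, ∑ k, W j k * (star (x j - x k) * (x j - x k)) := by
  rw [dotProduct_laplacian_mulVec, eq_inv_mul_iff_mul_eq₀ two_ne_zero, two_mul]
  nth_rw 2 [sum_comm]
  simp only [← sum_add_distrib]
  refine sum_congr rfl fun j _ => sum_congr rfl fun k _ => ?_
  rw [← transpose_apply W j k, hW, star_sub]
  ring

theorem posSemidef_laplacian {W : Matrix n n 𝕜} (hW : W.IsHermitian)
    (hnonneg : ∀ j k, 0 ≤ W j k) : W.laplacian.PosSemidef := by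
  have hsymm : Wᵀ = W := by
    ext j k
    rw [transpose_apply, ← hW.apply j k, (hnonneg k j).isSelfAdjoint.star_eq]
  refine .of_dotProduct_mulVec_nonneg ?_ fun x => ?_
  · refine (isHermitian_diagonal_of_self_adjoint _ ?_).sub hW
    exact IsSelfAdjoint.of_nonneg fun j => sum_nonneg fun k _ => by simpa using hnonneg j k
  · rw [dotProduct_laplacian_mulVec_of_symm hsymm]
    exact mul_nonneg (by positivity) (sum_nonneg fun j _ => sum_nonneg fun k _ =>
      mul_nonneg (hnonneg j k) (star_mul_self_nonneg _))

theorem exists_posSemidef_isDiag_add_offDiagSum_smul {ρ : Matrix n n 𝕜} (hρ : ρ.PosSemidef)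
    (htr : ρ.trace = 1) (hnonneg : ∀ j k, 0 ≤ ρ j k) :
    ∃ σ : Matrix n n 𝕜, σ.PosSemidef ∧ σ.trace = 1 ∧ (ρ + ρ.offDiagSum • σ).IsDiag := by
  have hL := posSemidef_laplacian hρ.isHermitian hnonneg
  obtain hS | hS := eq_or_ne ρ.offDiagSum 0
  · have hL0 : ρ.laplacian = 0 := hL.trace_eq_zero_iff.1 (by rw [trace_laplacian, hS])
    refine ⟨ρ, hρ, htr, ?_⟩
    simpa [hS, hL0] using isDiag_add_laplacian ρ
  · have hS_nonneg : 0 ≤ ρ.offDiagSum := sum_nonneg fun j _ => sum_nonneg fun k _ => hnonneg j k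
    refine ⟨ρ.offDiagSum⁻¹ • ρ.laplacian, hL.smul (inv_nonneg_of_nonneg hS_nonneg), ?_, ?_⟩
    · rw [trace_smul, trace_laplacian, smul_eq_mul, inv_mul_cancel₀ hS]
    · simpa [smul_smul, mul_inv_cancel₀ hS] using isDiag_add_laplacian ρ

end Matrix

/-- For a density matrix `ρ` with real nonnegative entries, the robustness of
coherence equals the `ℓ₁`-coherence `Σ_{j ≠ k} ρ_{jk}`. -/
theorem stmt_15 (d : ℕ) (ρ : Matrix (Fin d) (Fin d) ℂ)
    (hρ : ρ.PosSemidef) (htr : ρ.trace = 1)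
    (hreal : ∀ j k, (ρ j k).im = 0) (hnonneg : ∀ j k, 0 ≤ (ρ j k).re) :
    sInf {t : ℝ | 0 ≤ t ∧ ∃ σ : Matrix (Fin d) (Fin d) ℂ,
        σ.PosSemidef ∧ σ.trace = 1 ∧ (ρ + (t : ℂ) • σ).IsDiag}
      = ∑ j, ∑ k ∈ univ.filter (fun k => k ≠ j), (ρ j k).re := by
  have hρ_nonneg : ∀ j k, 0 ≤ ρ j k := fun j k =>
    Complex.nonneg_iff.2 ⟨hnonneg j k, (hreal j k).symm⟩
  have hS : ((∑ j, ∑ k ∈ univ.filter (fun k => k ≠ j), (ρ j k).re : ℝ) : ℂ) = ρ.offDiagSum := by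
    simp only [offDiagSum, Complex.ofReal_sum]
    exact sum_congr rfl fun j _ => sum_congr rfl fun k _ =>
      Complex.ext (by simp) (by simp [hreal])
  refine IsLeast.csInf_eq ⟨⟨sum_nonneg fun j _ => sum_nonneg fun k _ => hnonneg j k, ?_⟩, ?_⟩
  · rw [hS]
    exact exists_posSemidef_isDiag_add_offDiagSum_smul hρ htr hρ_nonneg
  · rintro t ⟨ht, σ, hσ, hσtr, hdiag⟩
    have := offDiagSum_le_of_isDiag_add_smul hσ hσtr (Complex.zero_le_real.2 ht) hdiag
    rwa [← hS, Complex.real_le_real] at this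
end

section
/- Let d ≥ 2 and let ρ, σ be d×d density matrices such that ρ_{x x'} ≠ 0 for all x ≠ x' (which forces ρ_{xx} > 0 for all x since ρ is positive semidefinite). Define the d×d matrix Q by Q_{xx} = min{σ_{xx}/ρ_{xx}, 1} and Q_{x x'} = σ_{x x'} / ρ_{x x'} for x ≠ x'. Then there exists a Kraus family on ℂ^d, each of whose members is either a diagonal matrix or of the form b·|x⟩⟨x'| with x ≠ x', whose channel satisfies Σ_j M_j ρ M_j† = σ, if and only if Q is positive semidefinite. -/
/-!
A diagonal Kraus operator `diagonal v` acts on `ρ` as the Schur multiplier `ρ ↦ (v v†) ⊙ ρ`,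
while `b·|x⟩⟨x'|` with `x ≠ x'` only moves population from `x'` to `x` and kills all coherences.
So an N-covariant channel maps `ρ` to `σ` iff there is a positive semidefinite `P` (the sum of
the `v v†`) with `P_{xx'} ρ_{xx'} = σ_{xx'}` off the diagonal, `P_{xx} ≤ 1` (trace preservation)
and `P_{xx} ρ_{xx} ≤ σ_{xx}`. Conversely, given such `P`, the slacks `t_a = σ_{aa} - P_{aa} ρ_{aa}`
and `s_b = 1 - P_{bb}` satisfy `∑ s_b ρ_{bb} = ∑ t_a` because the traces agree, so the product plan
`c_{ab} ∝ t_a s_b` is realised by the operators `√c_{ab} |a⟩⟨b|`, which complete the channel.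
Off the diagonal such a `P` must equal `Q`, and raising the diagonal of a positive semidefinite
matrix keeps it positive semidefinite, so `P` exists iff `Q ⪰ 0`.
-/

open Matrix ComplexOrder

lemma exists_transportPlan {m : Type*} [Fintype m] {s t w : m → ℝ} (hs : ∀ b, 0 ≤ s b)
    (ht : ∀ a, 0 ≤ t a) (hw : ∀ b, 0 < w b) (hsum : ∑ b, s b * w b = ∑ a, t a) :
    ∃ c : m → m → ℝ, (∀ a b, 0 ≤ c a b) ∧ (∀ b, ∑ a, c a b = s b) ∧
      ∀ a, ∑ b, c a b * w b = t a := by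
  by_cases hW : ∑ a, t a = 0
  · have ht0 : ∀ a, t a = 0 := fun a =>
      (Finset.sum_eq_zero_iff_of_nonneg fun a _ => ht a).mp hW a (Finset.mem_univ a)
    have hs0 : ∀ b, s b = 0 := fun b =>
      (mul_eq_zero.mp <| (Finset.sum_eq_zero_iff_of_nonneg fun b _ =>
        mul_nonneg (hs b) (hw b).le).mp (hsum.trans hW) b (Finset.mem_univ b)).resolve_right
        (hw b).ne'
    exact ⟨0, fun _ _ => le_rfl, by simp [hs0], by simp [ht0]⟩
  · have hW0 : 0 ≤ ∑ a, t a := Finset.sum_nonneg fun a _ => ht a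
    refine ⟨fun a b => t a * s b / ∑ a, t a, fun a b => div_nonneg (mul_nonneg (ht a) (hs b)) hW0,
      fun b => ?_, fun a => ?_⟩
    · rw [← Finset.sum_div, ← Finset.sum_mul]
      field_simp
    · simp_rw [div_mul_eq_mul_div, mul_assoc, ← Finset.sum_div, ← Finset.mul_sum, hsum]
      field_simp

lemma Matrix.diagonal_sum {n ι α : Type*} [DecidableEq n] [AddCommMonoid α] (s : Finset ι)
    (f : ι → n → α) : diagonal (∑ i ∈ s, f i) = ∑ i ∈ s, diagonal (f i) :=
  map_sum (diagonalAddMonoidHom n α) f s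

lemma Matrix.PosSemidef.of_offDiag_eq_of_diag_le {m R : Type*} [DecidableEq m] [CommRing R]
    [PartialOrder R] [StarRing R] [StarOrderedRing R] {P Q : Matrix m m R} (hP : P.PosSemidef)
    (hoff : ∀ x x', x ≠ x' → Q x x' = P x x') (hdiag : ∀ x, P x x ≤ Q x x) : Q.PosSemidef := by
  have hQ : Q = P + diagonal fun x => Q x x - P x x := by
    ext x x'
    by_cases h : x = x'
    · subst h; simp
    · simp [h, hoff x x' h]
  rw [hQ]
  exact hP.add (PosSemidef.diagonal fun x => sub_nonneg.mpr (hdiag x))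

section

variable {m : Type*} [DecidableEq m]

def IsCovariantKrausOp (M : Matrix m m ℂ) : Prop :=
  M.IsDiag ∨ ∃ (b : ℂ) (x x' : m), x ≠ x' ∧ M = single x x' b

noncomputable def coherenceRatio (ρ σ : Matrix m m ℂ) : Matrix m m ℂ :=
  of fun x x' => if x = x' then ((min ((σ x x).re / (ρ x x).re) 1 : ℝ) : ℂ) else σ x x' / ρ x x'

lemma coherenceRatio_apply_self (ρ σ : Matrix m m ℂ) (x : m) :
    coherenceRatio ρ σ x x = ((min ((σ x x).re / (ρ x x).re) 1 : ℝ) : ℂ) := by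
  simp [coherenceRatio]

lemma coherenceRatio_apply_of_ne (ρ σ : Matrix m m ℂ) {x x' : m} (h : x ≠ x') :
    coherenceRatio ρ σ x x' = σ x x' / ρ x x' := by
  simp [coherenceRatio, h]

structure IsCoherenceMultiplier (ρ σ P : Matrix m m ℂ) : Prop where
  posSemidef : P.PosSemidef
  mul_apply_of_ne : ∀ x x', x ≠ x' → P x x' * ρ x x' = σ x x'
  apply_self_le_one : ∀ x, P x x ≤ 1
  mul_apply_self_le : ∀ x, P x x * ρ x x ≤ σ x x

theorem exists_isCoherenceMultiplier_iff {ρ σ : Matrix m m ℂ} (hρ : ∀ x, 0 < ρ x x)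
    (hσ : σ.IsHermitian) (hoff : ∀ x x', x ≠ x' → ρ x x' ≠ 0) :
    (∃ P, IsCoherenceMultiplier ρ σ P) ↔ (coherenceRatio ρ σ).PosSemidef := by
  have hdiag : ∀ P : Matrix m m ℂ, P.IsHermitian → ∀ x,
      (P x x ≤ 1 ∧ P x x * ρ x x ≤ σ x x ↔ P x x ≤ coherenceRatio ρ σ x x) := by
    intro P hP x
    obtain ⟨r, hρx⟩ : ∃ r : ℝ, (r : ℂ) = ρ x x :=
      ⟨_, (Complex.eq_re_of_ofReal_le (r := 0) (by simpa using (hρ x).le)).symm⟩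
    have hr : 0 < r := Complex.zero_lt_real.mp (hρx ▸ hρ x)
    obtain ⟨p, hPx⟩ : ∃ p : ℝ, (p : ℂ) = P x x := ⟨_, by simpa using hP.coe_re_apply_self x⟩
    obtain ⟨q, hσx⟩ : ∃ q : ℝ, (q : ℂ) = σ x x := ⟨_, by simpa using hσ.coe_re_apply_self x⟩
    rw [coherenceRatio_apply_self, ← hρx, ← hPx, ← hσx]
    norm_cast
    rw [le_min_iff, le_div_iff₀ hr, and_comm]
  constructor
  · rintro ⟨P, hP⟩
    refine hP.posSemidef.of_offDiag_eq_of_diag_le (fun x x' h => ?_) fun x =>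
      (hdiag P hP.posSemidef.1 x).mp ⟨hP.apply_self_le_one x, hP.mul_apply_self_le x⟩
    rw [coherenceRatio_apply_of_ne _ _ h, ← hP.mul_apply_of_ne x x' h,
      mul_div_cancel_right₀ _ (hoff x x' h)]
  · intro hQ
    refine ⟨_, hQ, fun x x' h => ?_, fun x => ((hdiag _ hQ.1 x).mpr le_rfl).1,
      fun x => ((hdiag _ hQ.1 x).mpr le_rfl).2⟩
    rw [coherenceRatio_apply_of_ne _ _ h, div_mul_cancel₀ _ (hoff x x' h)]

variable [Fintype m]

lemma Matrix.PosSemidef.apply_eq_zero_of_apply_self_eq_zero {𝕜 : Type*} [RCLike 𝕜]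
    {A : Matrix m m 𝕜} (hA : A.PosSemidef) {x : m} (hx : A x x = 0) (y : m) : A y x = 0 := by
  have hquad : star (Pi.single x 1 : m → 𝕜) ⬝ᵥ A *ᵥ Pi.single x 1 = 0 := by
    simpa [mulVec_single, dotProduct, Pi.single_apply] using hx
  simpa [mulVec_single] using congrFun ((hA.dotProduct_mulVec_zero_iff _).mp hquad) y

lemma Matrix.PosSemidef.apply_self_pos {ρ : Matrix m m ℂ} (hρ : ρ.PosSemidef)
    (htr : ρ.trace ≠ 0) (hoff : ∀ x x', x ≠ x' → ρ x x' ≠ 0) (x : m) : 0 < ρ x x := by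
  refine lt_of_le_of_ne hρ.diag_nonneg fun hx => htr ?_
  have hcol := hρ.apply_eq_zero_of_apply_self_eq_zero hx.symm
  refine Finset.sum_eq_zero fun y _ => ?_
  obtain rfl : y = x := by_contra fun hy => hoff y x hy (hcol y)
  exact hcol y

lemma IsCovariantKrausOp.exists_diagonal_add {M : Matrix m m ℂ} (hM : IsCovariantKrausOp M)
    {ρ : Matrix m m ℂ} (hρ : ρ.PosSemidef) :
    ∃ v r s : m → ℂ, 0 ≤ r ∧ 0 ≤ s ∧
      M * ρ * Mᴴ = diagonal v * ρ * (diagonal v)ᴴ + diagonal r ∧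
      Mᴴ * M = (diagonal v)ᴴ * diagonal v + diagonal s := by
  rcases hM with hdiag | ⟨b, x, x', -, rfl⟩
  · obtain ⟨v, rfl⟩ : ∃ v, M = diagonal v :=
      ⟨_, ((isDiag_iff_diagonal_diag M).mp hdiag).symm⟩
    exact ⟨v, 0, 0, le_rfl, le_rfl, by simp, by simp⟩
  · refine ⟨0, Pi.single x (b * ρ x' x' * star b), Pi.single x' (star b * b),
      Pi.single_nonneg.mpr ?_, Pi.single_nonneg.mpr (star_mul_self_nonneg b), ?_, ?_⟩
    · rw [mul_right_comm]
      exact mul_nonneg (mul_star_self_nonneg b) hρ.diag_nonneg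
    · simp [diagonal_single]
    · simp [diagonal_single]

lemma sum_diagonal_mul_mul_conjTranspose {ι : Type*} [Fintype ι] (v : ι → m → ℂ)
    (ρ : Matrix m m ℂ) :
    ∑ i, diagonal (v i) * ρ * (diagonal (v i))ᴴ = (∑ i, vecMulVec (v i) (star (v i))) ⊙ ρ := by
  ext x x'
  simp [Matrix.sum_apply, Finset.sum_mul, vecMulVec_apply, mul_right_comm]

lemma sum_conjTranspose_diagonal_mul_diagonal {ι : Type*} [Fintype ι] (v : ι → m → ℂ) :
    ∑ i, (diagonal (v i))ᴴ * diagonal (v i) =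
      diagonal (∑ i, vecMulVec (v i) (star (v i))).diag := by
  ext x x'
  by_cases h : x = x'
  · subst h; simp [Matrix.sum_apply, mul_comm]
  · simp [Matrix.sum_apply, h]

lemma sum_single_sqrt_conjTranspose_mul (c : m → m → ℝ) (hc : ∀ a b, 0 ≤ c a b) :
    ∑ p : m × m, (single p.1 p.2 (√(c p.1 p.2) : ℂ))ᴴ * single p.1 p.2 (√(c p.1 p.2) : ℂ) =
      diagonal fun b => ∑ a, (c a b : ℂ) := by
  have hsq : ∀ a b, (single a b (√(c a b) : ℂ))ᴴ * single a b (√(c a b) : ℂ) =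
      single b b (c a b : ℂ) := by
    intro a b
    simp [← Complex.ofReal_mul, Real.mul_self_sqrt (hc a b)]
  simp only [hsq]
  ext x x'
  simp [Matrix.sum_apply, Fintype.sum_prod_type, single_apply, diagonal_apply, ite_and]

lemma sum_single_sqrt_mul_mul_conjTranspose (c : m → m → ℝ) (hc : ∀ a b, 0 ≤ c a b)
    (ρ : Matrix m m ℂ) :
    ∑ p : m × m, single p.1 p.2 (√(c p.1 p.2) : ℂ) * ρ * (single p.1 p.2 (√(c p.1 p.2) : ℂ))ᴴ =
      diagonal fun a => ∑ b, (c a b : ℂ) * ρ b b := by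
  have hsq : ∀ a b, single a b (√(c a b) : ℂ) * ρ * (single a b (√(c a b) : ℂ))ᴴ =
      single a a ((c a b : ℂ) * ρ b b) := by
    intro a b
    simp [mul_right_comm _ (ρ b b), ← Complex.ofReal_mul, Real.mul_self_sqrt (hc a b)]
  simp only [hsq]
  ext x x'
  simp [Matrix.sum_apply, Fintype.sum_prod_type, single_apply, diagonal_apply, ite_and]

theorem isCoherenceMultiplier_of_kraus {ι : Type*} [Fintype ι] {M : ι → Matrix m m ℂ}
    {ρ σ : Matrix m m ℂ} (hρ : ρ.PosSemidef) (htp : ∑ j, (M j)ᴴ * M j = 1)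
    (hM : ∀ j, IsCovariantKrausOp (M j)) (hσ : ∑ j, M j * ρ * (M j)ᴴ = σ) :
    ∃ P, IsCoherenceMultiplier ρ σ P := by
  choose v r s hr hs hMρ hMM using fun j => (hM j).exists_diagonal_add hρ
  set P := ∑ j, vecMulVec (v j) (star (v j))
  have hσP : σ = P ⊙ ρ + diagonal (∑ j, r j) := by
    rw [← hσ, Finset.sum_congr rfl fun j _ => hMρ j, Finset.sum_add_distrib,
      sum_diagonal_mul_mul_conjTranspose, diagonal_sum]
  have h1P : 1 = diagonal P.diag + diagonal (∑ j, s j) := by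
    rw [← htp, Finset.sum_congr rfl fun j _ => hMM j, Finset.sum_add_distrib,
      sum_conjTranspose_diagonal_mul_diagonal, diagonal_sum]
  refine ⟨P, ⟨posSemidef_sum _ fun j _ => posSemidef_vecMulVec_self_star _,
    fun x x' h => by simp [hσP, h], fun x => ?_, fun x => ?_⟩⟩
  · have hx := congrFun (congrFun h1P x) x
    simp only [one_apply_eq, Matrix.add_apply, diagonal_apply_eq, diag_apply,
      Finset.sum_apply] at hx
    exact hx ▸ le_add_of_nonneg_right (Finset.sum_nonneg fun j _ => hs j x)
  · have hx := congrFun (congrFun hσP x) x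
    simp only [Matrix.add_apply, hadamard_apply, diagonal_apply_eq, Finset.sum_apply] at hx
    exact hx ▸ le_add_of_nonneg_right (Finset.sum_nonneg fun j _ => hr j x)

theorem IsCoherenceMultiplier.exists_kraus {ρ σ P : Matrix m m ℂ}
    (hP : IsCoherenceMultiplier ρ σ P) (hρ : ∀ x, 0 < ρ x x) (htr : ρ.trace = σ.trace) :
    ∃ (n : ℕ) (M : Fin n → Matrix m m ℂ), (∑ j, (M j)ᴴ * M j = 1) ∧
      (∀ j, IsCovariantKrausOp (M j)) ∧ ∑ j, M j * ρ * (M j)ᴴ = σ := by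
  obtain ⟨k, v, hPv⟩ := posSemidef_iff_eq_sum_vecMulVec.mp hP.posSemidef
  choose s hs0 hs using fun b => RCLike.nonneg_iff_exists_ofReal.mp
    (sub_nonneg.mpr (hP.apply_self_le_one b))
  choose t ht0 ht using fun a => RCLike.nonneg_iff_exists_ofReal.mp
    (sub_nonneg.mpr (hP.mul_apply_self_le a))
  choose w hw0 hw using fun b => RCLike.pos_iff_exists_ofReal.mp (hρ b)
  simp only [RCLike.ofReal_eq_complex_ofReal] at hs ht hw
  have hsum : ∑ b, s b * w b = ∑ a, t a := by
    have : ∑ b, ((s b * w b : ℝ) : ℂ) = ∑ a, (t a : ℂ) := by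
      simp only [Complex.ofReal_mul, hs, ht, hw, sub_mul, one_mul, Finset.sum_sub_distrib]
      exact congrArg (· - _) htr
    exact_mod_cast this
  obtain ⟨c, hc0, hcol, hrow⟩ := exists_transportPlan hs0 ht0 hw0 hsum
  let F : Fin k ⊕ m × m → Matrix m m ℂ :=
    Sum.elim (fun i => diagonal (v i)) fun p => single p.1 p.2 (√(c p.1 p.2) : ℂ)
  have htp : ∑ i, (F i)ᴴ * F i = 1 := by
    rw [Fintype.sum_sum_type]
    simp only [F, Sum.elim_inl, Sum.elim_inr]
    rw [sum_conjTranspose_diagonal_mul_diagonal, sum_single_sqrt_conjTranspose_mul c hc0, ← hPv,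
      diagonal_add, ← diagonal_one]
    congr 1
    funext b
    rw [diag_apply, ← Complex.ofReal_sum, hcol, hs, add_sub_cancel]
  have hch : ∑ i, F i * ρ * (F i)ᴴ = σ := by
    rw [Fintype.sum_sum_type]
    simp only [F, Sum.elim_inl, Sum.elim_inr]
    rw [sum_diagonal_mul_mul_conjTranspose, sum_single_sqrt_mul_mul_conjTranspose c hc0, ← hPv]
    ext x x'
    by_cases h : x = x'
    · subst h
      have hmoved : ∑ b, (c x b : ℂ) * ρ b b = σ x x - P x x * ρ x x := by
        rw [← ht, ← hrow, Complex.ofReal_sum]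
        simp only [Complex.ofReal_mul, hw]
      rw [Matrix.add_apply, hadamard_apply, diagonal_apply_eq, hmoved, add_sub_cancel]
    · simp [h, hP.mul_apply_of_ne x x' h]
  have hcov : ∀ i, IsCovariantKrausOp (F i) := by
    rintro (i | ⟨a, b⟩)
    · exact Or.inl (isDiag_diagonal _)
    · by_cases hab : a = b
      · subst hab
        show IsCovariantKrausOp (single a a _)
        rw [← diagonal_single]
        exact Or.inl (isDiag_diagonal _)
      · exact Or.inr ⟨_, a, b, hab, rfl⟩
  let e := (Fintype.equivFin (Fin k ⊕ m × m)).symm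
  exact ⟨_, F ∘ e, htp ▸ e.sum_comp (fun i => (F i)ᴴ * F i), fun j => hcov (e j),
    hch ▸ e.sum_comp (fun i => F i * ρ * (F i)ᴴ)⟩

end

theorem stmt_18_general (d : ℕ) (ρ σ : Matrix (Fin d) (Fin d) ℂ)
    (hρ : ρ.PosSemidef) (hρt : ρ.trace = 1) (hσ : σ.PosSemidef) (hσt : σ.trace = 1)
    (hoff : ∀ x x', x ≠ x' → ρ x x' ≠ 0) :
    (∃ (n : ℕ) (M : Fin n → Matrix (Fin d) (Fin d) ℂ),
        (∑ j, (M j)ᴴ * M j = 1) ∧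
        (∀ j, (M j).IsDiag ∨
          ∃ (b : ℂ) (x x' : Fin d), x ≠ x' ∧ M j = Matrix.single x x' b) ∧
        (∑ j, M j * ρ * (M j)ᴴ) = σ) ↔
    (Matrix.of fun x x' : Fin d =>
        if x = x' then ((min ((σ x x).re / (ρ x x).re) 1 : ℝ) : ℂ)
        else σ x x' / ρ x x').PosSemidef := by
  have hρpos := hρ.apply_self_pos (hρt ▸ one_ne_zero) hoff
  refine Iff.trans ?_ (exists_isCoherenceMultiplier_iff hρpos hσ.isHermitian hoff)
  constructor
  · rintro ⟨n, M, htp, hM, hch⟩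
    exact isCoherenceMultiplier_of_kraus hρ htp hM hch
  · rintro ⟨P, hP⟩
    exact hP.exists_kraus hρpos (hρt.trans hσt.symm)

/-- For density matrices `ρ, σ` with all off-diagonal entries of `ρ` nonzero,
there is an N-covariant channel (Kraus operators diagonal or multiples of
off-diagonal matrix units) mapping `ρ` to `σ` iff the matrix `Q` with
`Q_{xx} = min{σ_{xx}/ρ_{xx}, 1}` and `Q_{xx'} = σ_{xx'}/ρ_{xx'}` (`x ≠ x'`)
is positive semidefinite. -/
theorem stmt_18 (d : ℕ) (hd : 2 ≤ d) (ρ σ : Matrix (Fin d) (Fin d) ℂ)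
    (hρ : ρ.PosSemidef) (hρt : ρ.trace = 1) (hσ : σ.PosSemidef) (hσt : σ.trace = 1)
    (hoff : ∀ x x', x ≠ x' → ρ x x' ≠ 0) :
    (∃ (n : ℕ) (M : Fin n → Matrix (Fin d) (Fin d) ℂ),
        (∑ j, (M j)ᴴ * M j = 1) ∧
        (∀ j, (M j).IsDiag ∨
          ∃ (b : ℂ) (x x' : Fin d), x ≠ x' ∧ M j = Matrix.single x x' b) ∧
        (∑ j, M j * ρ * (M j)ᴴ) = σ) ↔
    (Matrix.of fun x x' : Fin d =>
        if x = x' then ((min ((σ x x).re / (ρ x x).re) 1 : ℝ) : ℂ)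
        else σ x x' / ρ x x').PosSemidef :=
  stmt_18_general d ρ σ hρ hρt hσ hσt hoff
end
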